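/- Suppose x_k ≥ 0 satisfies 1ᵀx_k > 1 and x_{k+1} = G(x_k) for all k, with α ∈ (1/2, 1). Then the sequence of sums 1ᵀx_k tends to +∞, so the iteration diverges. -/

import Mathlib

/-!
Summing the coordinates of `x ↦ α R (x ⊗ x) + (1 - α) v` turns the iteration into the scalar
recursion `s ↦ α s² + (1 - α)`. Writing `s = 1 + d`, the excess satisfies
`d ↦ α d² + 2α d ≥ 2α d`, so it grows at least like `(2α)^k` with `2α > 1`.
-/

noncomputable def Gmap (n : ℕ) (α : ℝ) (v : Fin n → ℝ)
    (R : Matrix (Fin n) (Fin n × Fin n) ℝ) (x : Fin n → ℝ) : Fin n → ℝ :=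
  α • R.mulVec (fun p => x p.1 * x p.2) + (1 - α) • v

open Filter Finset

theorem Matrix.sum_mulVec_of_sum_col_eq_one {m l 𝕜 : Type*} [Fintype m] [Fintype l]
    [NonAssocSemiring 𝕜] {M : Matrix m l 𝕜} (hM : ∀ j, ∑ i, M i j = 1) (y : l → 𝕜) :
    ∑ i, M.mulVec y i = ∑ j, y j := by
  simp only [Matrix.mulVec, dotProduct]
  rw [Finset.sum_comm]
  simp [← Finset.sum_mul, hM]

theorem sum_Gmap {n : ℕ} {α : ℝ} {v : Fin n → ℝ} (hv1 : ∑ i, v i = 1)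
    {R : Matrix (Fin n) (Fin n × Fin n) ℝ} (hRs : ∀ j, ∑ i, R i j = 1) (x : Fin n → ℝ) :
    ∑ i, Gmap n α v R x i = α * (∑ i, x i) ^ 2 + (1 - α) := by
  simp only [Gmap, Pi.add_apply, Pi.smul_apply, smul_eq_mul, sum_add_distrib, ← mul_sum, hv1,
    Matrix.sum_mulVec_of_sum_col_eq_one hRs, Fintype.sum_prod_type, ← sum_mul, sq,
    mul_one]

theorem pow_mul_le_of_mul_le_succ {𝕜 : Type*} [Semiring 𝕜] [PartialOrder 𝕜] [IsOrderedRing 𝕜]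
    {c : 𝕜} (hc : 0 ≤ c) {d : ℕ → 𝕜}
    (h : ∀ k, c * d k ≤ d (k + 1)) (k : ℕ) : c ^ k * d 0 ≤ d k := by
  induction k with
  | zero => simp
  | succ k ih =>
    calc c ^ (k + 1) * d 0 = c * (c ^ k * d 0) := by rw [pow_succ', mul_assoc]
      _ ≤ c * d k := mul_le_mul_of_nonneg_left ih hc
      _ ≤ d (k + 1) := h k

theorem tendsto_atTop_of_quadratic_iterate {α : ℝ} (hα : 1 / 2 < α) {s : ℕ → ℝ}
    (hs0 : 1 < s 0) (hs : ∀ k, s (k + 1) = α * s k ^ 2 + (1 - α)) :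
    Tendsto s atTop atTop := by
  have hα0 : 0 ≤ α := by linarith
  have hexcess : ∀ k, s (k + 1) - 1 = α * (s k - 1) ^ 2 + 2 * α * (s k - 1) := by
    intro k
    rw [hs]
    ring
  have hexcess_nonneg : ∀ k, 0 ≤ s k - 1 := by
    intro k
    induction k with
    | zero => linarith
    | succ k ih => rw [hexcess]; positivity
  have hgrowth : ∀ k, (2 * α) * (s k - 1) ≤ s (k + 1) - 1 := by
    intro k
    rw [hexcess]
    nlinarith [mul_nonneg hα0 (sq_nonneg (s k - 1))]
  have hgeom : Tendsto (fun k => (2 * α) ^ k * (s 0 - 1) + 1) atTop atTop :=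
    tendsto_atTop_add_const_right _ _
      ((tendsto_pow_atTop_atTop_of_one_lt (by linarith)).atTop_mul_const (by linarith))
  refine tendsto_atTop_mono (fun k => ?_) hgeom
  linarith [pow_mul_le_of_mul_le_succ (by linarith) hgrowth k]

theorem stmt_12_general (n : ℕ) (α : ℝ) (hα : α ∈ Set.Ioo (1/2 : ℝ) 1)
    (v : Fin n → ℝ) (hv1 : ∑ i, v i = 1)
    (R : Matrix (Fin n) (Fin n × Fin n) ℝ)
    (hRs : ∀ j, ∑ i, R i j = 1)
    (x : ℕ → Fin n → ℝ)
    (hsum : ∀ k, 1 < ∑ i, x k i)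
    (hrec : ∀ k, x (k + 1) = Gmap n α v R (x k)) :
    Filter.Tendsto (fun k => ∑ i, x k i) Filter.atTop Filter.atTop :=
  tendsto_atTop_of_quadratic_iterate hα.1 (hsum 0)
    fun k => by rw [hrec k, sum_Gmap hv1 hRs]

theorem stmt_12 (n : ℕ) (hn : 1 ≤ n) (α : ℝ) (hα : α ∈ Set.Ioo (1/2 : ℝ) 1)
    (v : Fin n → ℝ) (hv : ∀ i, 0 ≤ v i) (hv1 : ∑ i, v i = 1)
    (R : Matrix (Fin n) (Fin n × Fin n) ℝ) (hR : ∀ i j, 0 ≤ R i j)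
    (hRs : ∀ j, ∑ i, R i j = 1)
    (x : ℕ → Fin n → ℝ) (hx0 : ∀ k i, 0 ≤ x k i)
    (hsum : ∀ k, 1 < ∑ i, x k i)
    (hrec : ∀ k, x (k + 1) = Gmap n α v R (x k)) :
    Filter.Tendsto (fun k => ∑ i, x k i) Filter.atTop Filter.atTop :=
  stmt_12_general n α hα v hv1 R hRs x hsum hrec
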